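/- arXiv:1703.09208 — 2 statements merged into one kernel-verified Lean document; each statement's English description precedes it below -/
import Mathlib

section
/- Let K : ℝ → ℝ be continuously differentiable and define K̄(z, z̃) = (z̃/z)·|K(z̃ − z) − K(z̃ + z)| for z, z̃ > 0. Then sup over z̃ > 0 of ∫₀^∞ K̄(z, z̃) dz is bounded by a universal constant times ( ∫_ℝ |K(z)| dz + sup_{z ∈ ℝ} z²·|K′(z)| ). -/
open MeasureTheory Set

/-!
For `z ≤ zt / 2` the whole segment `[zt - z, zt + z]` lies in `[zt / 2, ∞)`, where
`|K'| ≤ 4M / zt²`; the mean value theorem then bounds the kernel by `8M / zt`, which contributes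
`4M` over `(0, zt / 2]`. For `z > zt / 2` the factor `zt / z` is at most `2`, and each of the two
translates of `|K|` integrates to at most `∫ |K|`.
-/

section

variable {K : ℝ → ℝ} {M t : ℝ}

lemma abs_deriv_le_of_half_le (hM : ∀ x, x ^ 2 * |deriv K x| ≤ M) (ht : 0 < t) {x : ℝ}
    (hx : t / 2 ≤ x) : |deriv K x| ≤ 4 * M / t ^ 2 := by
  have hsq : (t / 2) ^ 2 ≤ x ^ 2 := pow_le_pow_left₀ (by positivity) hx 2
  rw [le_div_iff₀ (by positivity)]
  nlinarith [abs_nonneg (deriv K x), hM x]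

lemma abs_sub_le_of_sq_mul_abs_deriv_le (hK : Differentiable ℝ K)
    (hM : ∀ x, x ^ 2 * |deriv K x| ≤ M) (ht : 0 < t) {z : ℝ} (hz0 : 0 ≤ z) (hz : z ≤ t / 2) :
    |K (t - z) - K (t + z)| ≤ 8 * M * z / t ^ 2 := by
  have hderiv : ∀ x ∈ Icc (t - z) (t + z), ‖deriv K x‖ ≤ 4 * M / t ^ 2 := fun x hx =>
    abs_deriv_le_of_half_le hM ht (by linarith [hx.1])
  have hmvt := (convex_Icc (t - z) (t + z)).norm_image_sub_le_of_norm_deriv_le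
    (fun x _ => hK x) hderiv (left_mem_Icc.2 (by linarith)) (right_mem_Icc.2 (by linarith))
  rw [Real.norm_eq_abs, Real.norm_eq_abs, abs_sub_comm, show t + z - (t - z) = 2 * z by ring,
    abs_of_nonneg (show 0 ≤ 2 * z by linarith)] at hmvt
  calc |K (t - z) - K (t + z)| ≤ 4 * M / t ^ 2 * (2 * z) := hmvt
    _ = 8 * M * z / t ^ 2 := by ring

lemma div_mul_abs_sub_le (hK : Differentiable ℝ K) (hM : ∀ x, x ^ 2 * |deriv K x| ≤ M)
    (ht : 0 < t) {z : ℝ} (hz : 0 < z) :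
    t / z * |K (t - z) - K (t + z)| ≤
      (Ioc 0 (t / 2)).indicator (fun _ => 8 * M / t) z + 2 * (|K (t - z)| + |K (t + z)|) := by
  have hK0 : 0 ≤ 2 * (|K (t - z)| + |K (t + z)|) := by positivity
  rcases le_or_gt z (t / 2) with hsmall | hlarge
  · rw [indicator_of_mem (mem_Ioc.2 ⟨hz, hsmall⟩)]
    calc t / z * |K (t - z) - K (t + z)| ≤ t / z * (8 * M * z / t ^ 2) :=
          mul_le_mul_of_nonneg_left
            (abs_sub_le_of_sq_mul_abs_deriv_le hK hM ht hz.le hsmall) (by positivity)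
      _ = 8 * M / t := by field_simp
      _ ≤ _ := le_add_of_nonneg_right hK0
  · rw [indicator_of_notMem (fun h => (not_le.2 hlarge) h.2), zero_add]
    have hratio : t / z ≤ 2 := by rw [div_le_iff₀ hz]; linarith
    calc t / z * |K (t - z) - K (t + z)| ≤ t / z * (|K (t - z)| + |K (t + z)|) :=
          mul_le_mul_of_nonneg_left (abs_sub _ _) (by positivity)
      _ ≤ 2 * (|K (t - z)| + |K (t + z)|) :=
          mul_le_mul_of_nonneg_right hratio (by positivity)

end

lemma setIntegral_abs_comp_sub_left_le {K : ℝ → ℝ} (hK : Integrable K) (t : ℝ) (s : Set ℝ) :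
    ∫ z in s, |K (t - z)| ≤ ∫ z, |K z| :=
  calc ∫ z in s, |K (t - z)| ≤ ∫ z, |K (t - z)| :=
        setIntegral_le_integral (hK.comp_sub_left t).abs (ae_of_all _ fun _ => abs_nonneg _)
    _ = ∫ z, |K z| := integral_sub_left_eq_self (fun z => |K z|) volume t

lemma setIntegral_abs_comp_add_left_le {K : ℝ → ℝ} (hK : Integrable K) (t : ℝ) (s : Set ℝ) :
    ∫ z in s, |K (t + z)| ≤ ∫ z, |K z| :=
  calc ∫ z in s, |K (t + z)| ≤ ∫ z, |K (t + z)| :=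
        setIntegral_le_integral (hK.comp_add_left t).abs (ae_of_all _ fun _ => abs_nonneg _)
    _ = ∫ z, |K z| := integral_add_left_eq_self (fun z => |K z|) t

lemma setIntegral_Ioi_indicator_Ioc_const {a b : ℝ} (hab : a ≤ b) (c : ℝ) :
    ∫ z in Ioi a, (Ioc a b).indicator (fun _ => c) z = (b - a) * c := by
  rw [setIntegral_indicator measurableSet_Ioc, inter_eq_right.2 Ioc_subset_Ioi_self,
    setIntegral_const, measureReal_def, Real.volume_Ioc, ENNReal.toReal_ofReal (by linarith),
    smul_eq_mul]

/-- Kernel lemma: `K̄(z, zt) = (zt/z)|K(zt−z) − K(zt+z)|` satisfies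
`sup_{zt>0} ∫₀^∞ K̄(z,zt) dz ≲ ∫_ℝ |K| + sup_z z²|K′(z)|`. -/
theorem stmt0 :
    ∃ C : ℝ, 0 < C ∧
      ∀ (K : ℝ → ℝ), ContDiff ℝ 1 K → Integrable K →
        ∀ M : ℝ, (∀ z : ℝ, z ^ 2 * |deriv K z| ≤ M) →
          ∀ zt : ℝ, 0 < zt →
            ∫ z in Ioi (0 : ℝ), (zt / z) * |K (zt - z) - K (zt + z)| ≤
              C * ((∫ z : ℝ, |K z|) + M) := by
  refine ⟨4, by norm_num, fun K hK hKint M hM t ht => ?_⟩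
  have hInd : Integrable ((Ioc 0 (t / 2)).indicator fun _ => 8 * M / t) :=
    (integrable_indicator_iff measurableSet_Ioc).2 (integrableOn_const measure_Ioc_lt_top.ne)
  have hK1 := (hKint.comp_sub_left t).abs
  have hK2 := (hKint.comp_add_left t).abs
  have hK12 : Integrable fun z => 2 * (|K (t - z)| + |K (t + z)|) := (hK1.add hK2).const_mul 2
  have hdom : ∀ᵐ z ∂volume.restrict (Ioi 0), t / z * |K (t - z) - K (t + z)| ≤
      (Ioc 0 (t / 2)).indicator (fun _ => 8 * M / t) z + 2 * (|K (t - z)| + |K (t + z)|) :=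
    (ae_restrict_iff' measurableSet_Ioi).2 <| ae_of_all _ fun z hz =>
      div_mul_abs_sub_le (hK.differentiable one_ne_zero) hM ht hz
  have hnonneg : ∀ᵐ z ∂volume.restrict (Ioi 0), 0 ≤ t / z * |K (t - z) - K (t + z)| :=
    (ae_restrict_iff' measurableSet_Ioi).2 <| ae_of_all _ fun z (hz : 0 < z) => by positivity
  calc ∫ z in Ioi 0, t / z * |K (t - z) - K (t + z)|
      ≤ ∫ z in Ioi 0, ((Ioc 0 (t / 2)).indicator (fun _ => 8 * M / t) z
          + 2 * (|K (t - z)| + |K (t + z)|)) :=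
        integral_mono_of_nonneg hnonneg (hInd.add hK12).integrableOn hdom
    _ = t / 2 * (8 * M / t) + 2 * ((∫ z in Ioi 0, |K (t - z)|) + ∫ z in Ioi 0, |K (t + z)|) := by
        rw [integral_add hInd.integrableOn hK12.integrableOn,
          integral_const_mul, integral_add hK1.integrableOn hK2.integrableOn,
          setIntegral_Ioi_indicator_Ioc_const (by positivity), sub_zero]
    _ ≤ 4 * ((∫ z, |K z|) + M) := by
        have := setIntegral_abs_comp_sub_left_le hKint t (Ioi 0)
        have := setIntegral_abs_comp_add_left_le hKint t (Ioi 0)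
        rw [show t / 2 * (8 * M / t) = 4 * M by field_simp; ring]
        linarith
end

section
/- Let Γ₁(z, t) = t^{−1/2} e^{−z²/(4t)} and fix t > 0. Define for z, z̃ > 0 the kernel K_t(z, z̃) = (z̃/z)|Γ₁(z − z̃, t) − Γ₁(z + z̃, t)|. Then sup_{z̃ > 0} ∫₀^∞ K_t(z, z̃) dz ≤ C for a universal constant C independent of t. -/
open MeasureTheory Set Real

set_option maxHeartbeats 1000000 in

lemma key_ptwise (t : ℝ) (ht : 0 < t) (zt : ℝ) (hzt : 0 < zt) (z : ℝ) (hz : 0 < z) :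
    (zt / z) *
        |t ^ (-(1 : ℝ) / 2) * Real.exp (-((z - zt) ^ 2) / (4 * t)) -
          t ^ (-(1 : ℝ) / 2) * Real.exp (-((z + zt) ^ 2) / (4 * t))|
      ≤ 32 * (t ^ (-(1 : ℝ) / 2) * Real.exp (-((z - zt) ^ 2) / (8 * t))) := by
  set s : ℝ := t ^ (-(1 : ℝ) / 2) with hs
  have hspos : 0 < s := Real.rpow_pos_of_pos ht _
  set A : ℝ := Real.exp (-((z - zt) ^ 2) / (4 * t)) with hA
  set B : ℝ := Real.exp (-((z + zt) ^ 2) / (4 * t)) with hB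
  set E : ℝ := Real.exp (-((z - zt) ^ 2) / (8 * t)) with hE
  have hBA : B ≤ A := by
    apply Real.exp_le_exp.2
    rw [div_le_div_iff₀ (by positivity) (by positivity)]
    nlinarith [mul_pos hz hzt, sq_nonneg (z + zt), sq_nonneg (z - zt)]
  have habs : |s * A - s * B| = s * (A - B) := by
    rw [abs_of_nonneg]
    · ring
    · nlinarith
  rw [habs]
  have hAE : A ≤ E := by
    apply Real.exp_le_exp.2
    rw [div_le_div_iff₀ (by positivity) (by positivity)]
    nlinarith [sq_nonneg (z - zt)]
  have hBeq : B = A * Real.exp (-(z * zt / t)) := by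
    rw [hB, hA, ← Real.exp_add]
    congr 1
    field_simp
    ring
  have hexp_le_one : Real.exp (-(z * zt / t)) ≤ 1 :=
    Real.exp_le_one_iff.2 (by positivity |> neg_nonpos_of_nonneg)
  have hexp_ge : 1 - z * zt / t ≤ Real.exp (-(z * zt / t)) := by
    have := Real.add_one_le_exp (-(z * zt / t))
    linarith
  have hApos : 0 < A := Real.exp_pos _
  have hEpos : 0 < E := Real.exp_pos _
  clear_value s A B E
  have key : (zt / z) * (A - B) ≤ 32 * E := by
    rw [hBeq]
    rcases le_or_gt zt (2 * z) with hcase | hcase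
    · have h1 : zt / z ≤ 2 := by rw [div_le_iff₀ hz]; linarith
      have h2 : A * (1 - Real.exp (-(z * zt / t))) ≤ E := by
        nlinarith [Real.exp_pos (-(z * zt / t))]
      calc (zt / z) * (A - A * Real.exp (-(z * zt / t)))
          = (zt / z) * (A * (1 - Real.exp (-(z * zt / t)))) := by ring
        _ ≤ 2 * E := by
            apply mul_le_mul h1 h2 (by nlinarith [Real.exp_pos (-(z * zt / t))]) (by norm_num)
        _ ≤ 32 * E := by nlinarith
    · -- zt > 2z
      set x : ℝ := zt ^ 2 / (32 * t) with hx
      have hxpos : 0 < x := by rw [hx]; positivity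
      clear_value x
      have hstep1 : (zt / z) * (A - A * Real.exp (-(z * zt / t))) ≤ (zt ^ 2 / t) * A := by
        have h1 : A - A * Real.exp (-(z * zt / t)) ≤ A * (z * zt / t) := by
          nlinarith
        have h2 : (zt / z) * (A * (z * zt / t)) = (zt ^ 2 / t) * A := by
          field_simp
        calc (zt / z) * (A - A * Real.exp (-(z * zt / t)))
            ≤ (zt / z) * (A * (z * zt / t)) := by
              apply mul_le_mul_of_nonneg_left h1 (by positivity)
          _ = (zt ^ 2 / t) * A := h2
      have hq : zt ^ 2 ≤ 4 * (z - zt) ^ 2 := by nlinarith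
      have hAE2 : A ≤ Real.exp (-x) * E := by
        rw [hE, hA, ← Real.exp_add]
        apply Real.exp_le_exp.2
        have hdiff : -x + -((z - zt) ^ 2) / (8 * t) - (-((z - zt) ^ 2) / (4 * t))
            = (4 * (z - zt) ^ 2 - zt ^ 2) / (32 * t) := by
          rw [hx]; field_simp; ring
        have hnn : 0 ≤ (4 * (z - zt) ^ 2 - zt ^ 2) / (32 * t) :=
          div_nonneg (by linarith) (by positivity)
        linarith
      have hxe : (zt ^ 2 / t) * Real.exp (-x) ≤ 32 := by
        have h1 : x ≤ Real.exp x := by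
          have := Real.add_one_le_exp x; linarith
        have h2 : x * Real.exp (-x) ≤ 1 := by
          calc x * Real.exp (-x) ≤ Real.exp x * Real.exp (-x) :=
                mul_le_mul_of_nonneg_right h1 (Real.exp_pos _).le
            _ = 1 := by rw [← Real.exp_add]; simp
        have h3 : zt ^ 2 / t = 32 * x := by rw [hx]; field_simp
        rw [h3]
        calc 32 * x * Real.exp (-x) = 32 * (x * Real.exp (-x)) := by ring
          _ ≤ 32 * 1 := mul_le_mul_of_nonneg_left h2 (by norm_num)
          _ = 32 := by ring
      calc (zt / z) * (A - A * Real.exp (-(z * zt / t)))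
          ≤ (zt ^ 2 / t) * A := hstep1
        _ ≤ (zt ^ 2 / t) * (Real.exp (-x) * E) :=
            mul_le_mul_of_nonneg_left hAE2 (by positivity)
        _ = ((zt ^ 2 / t) * Real.exp (-x)) * E := by ring
        _ ≤ 32 * E := mul_le_mul_of_nonneg_right hxe hEpos.le
  calc (zt / z) * (s * (A - B)) = s * ((zt / z) * (A - B)) := by ring
    _ ≤ s * (32 * E) := mul_le_mul_of_nonneg_left key hspos.le
    _ = 32 * (s * E) := by ring

lemma gauss_int (t : ℝ) (ht : 0 < t) (zt : ℝ) :
    ∫ z in Ioi (0:ℝ), 32 * (t ^ (-(1:ℝ)/2) * Real.exp (-((z - zt) ^ 2) / (8 * t)))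
      ≤ 32 * Real.sqrt (8 * Real.pi) := by
  set s : ℝ := t ^ (-(1:ℝ)/2) with hs
  have hspos : 0 < s := Real.rpow_pos_of_pos ht _
  set b : ℝ := 1 / (8 * t) with hb
  have hbpos : 0 < b := by rw [hb]; positivity
  have hgeq : ∀ z : ℝ, 32 * (s * Real.exp (-((z - zt) ^ 2) / (8 * t)))
      = (32 * s) * Real.exp (-b * (z - zt) ^ 2) := by
    intro z
    rw [hb]
    rw [show -((z - zt) ^ 2) / (8 * t) = -(1 / (8 * t)) * (z - zt) ^ 2 by ring]
    ring
  simp_rw [hgeq]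
  have hint : Integrable (fun z : ℝ => (32 * s) * Real.exp (-b * (z - zt) ^ 2)) :=
    (((integrable_exp_neg_mul_sq hbpos).comp_sub_right zt).const_mul _)
  have hle : ∫ z in Ioi (0:ℝ), (32 * s) * Real.exp (-b * (z - zt) ^ 2)
      ≤ ∫ z : ℝ, (32 * s) * Real.exp (-b * (z - zt) ^ 2) := by
    apply setIntegral_le_integral hint
    filter_upwards with z
    positivity
  have hval : ∫ z : ℝ, (32 * s) * Real.exp (-b * (z - zt) ^ 2)
      = (32 * s) * Real.sqrt (Real.pi / b) := by
    rw [MeasureTheory.integral_const_mul,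
      integral_sub_right_eq_self (fun x => Real.exp (-b * x ^ 2)) zt, integral_gaussian]
  have hsval : s = (Real.sqrt t)⁻¹ := by
    rw [hs, show (-(1:ℝ)/2) = -(1/2 : ℝ) by norm_num, Real.rpow_neg ht.le,
      ← Real.sqrt_eq_rpow]
  have hpib : Real.pi / b = (8 * Real.pi) * t := by
    rw [hb]; field_simp
  have hfin : (32 * s) * Real.sqrt (Real.pi / b) = 32 * Real.sqrt (8 * Real.pi) := by
    rw [hpib, Real.sqrt_mul (by positivity) t, hsval]
    have hst : Real.sqrt t ≠ 0 := ne_of_gt (Real.sqrt_pos.2 ht)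
    field_simp
  rw [hval, hfin] at hle
  exact hle

/-- For `Γ₁(z,t) = t^{-1/2} e^{−z²/(4t)}` and the kernel
`K_t(z,zt) = (zt/z)|Γ₁(z−zt,t) − Γ₁(z+zt,t)|`:
`sup_{zt>0} ∫₀^∞ K_t(z,zt) dz ≤ C` uniformly in `t > 0`. -/
theorem stmt17 :
    ∃ C : ℝ, 0 < C ∧
      ∀ t : ℝ, 0 < t → ∀ zt : ℝ, 0 < zt →
        ∫ z in Ioi (0 : ℝ),
            (zt / z) *
              |t ^ (-(1 : ℝ) / 2) * Real.exp (-((z - zt) ^ 2) / (4 * t)) -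
                t ^ (-(1 : ℝ) / 2) * Real.exp (-((z + zt) ^ 2) / (4 * t))|
          ≤ C := by
  refine ⟨32 * Real.sqrt (8 * Real.pi), by positivity, ?_⟩
  intro t ht zt hzt
  have hgint : Integrable
      (fun z : ℝ => 32 * (t ^ (-(1:ℝ)/2) * Real.exp (-((z - zt) ^ 2) / (8 * t))))
      (volume.restrict (Ioi 0)) := by
    have hbpos : (0:ℝ) < 1 / (8 * t) := by positivity
    have heq : (fun z : ℝ => 32 * (t ^ (-(1:ℝ)/2) * Real.exp (-((z - zt) ^ 2) / (8 * t))))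
        = fun z : ℝ => (32 * t ^ (-(1:ℝ)/2)) * Real.exp (-(1 / (8 * t)) * (z - zt) ^ 2) := by
      funext z
      rw [show -((z - zt) ^ 2) / (8 * t) = -(1 / (8 * t)) * (z - zt) ^ 2 by ring]
      ring
    rw [heq]
    exact (((integrable_exp_neg_mul_sq hbpos).comp_sub_right zt).const_mul _).restrict
  have hmono :
      ∫ z in Ioi (0 : ℝ),
          (zt / z) *
            |t ^ (-(1 : ℝ) / 2) * Real.exp (-((z - zt) ^ 2) / (4 * t)) -
              t ^ (-(1 : ℝ) / 2) * Real.exp (-((z + zt) ^ 2) / (4 * t))|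
        ≤ ∫ z in Ioi (0:ℝ), 32 * (t ^ (-(1:ℝ)/2) * Real.exp (-((z - zt) ^ 2) / (8 * t))) := by
    apply integral_mono_of_nonneg
    · filter_upwards [self_mem_ae_restrict measurableSet_Ioi] with z hz
      have hz' : (0:ℝ) < z := hz
      positivity
    · exact hgint
    · filter_upwards [self_mem_ae_restrict measurableSet_Ioi] with z hz
      exact key_ptwise t ht zt hzt z hz
  exact hmono.trans (gauss_int t ht zt)
end
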